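/- The cardinality of the set M_d of permutations σ of Fin(2d) such that σ maps {0,...,d-1} onto {d,...,2d-1} and σ² has the form τ·ω^d(τ) for some τ ∈ S_d, equals p(d)·d!, where p(d) is the number of partitions of d. -/

import Mathlib

/-- The shift of a permutation of `ℕ` up by `d`: fixes `{0,…,d-1}` and acts as `σ`
conjugated by `k ↦ k + d` above. -/
def shift (d : ℕ) (σ : Equiv.Perm ℕ) : Equiv.Perm ℕ where
  toFun k := if k < d then k else σ (k - d) + d
  invFun k := if k < d then k else σ⁻¹ (k - d) + d
  left_inv k := by
    by_cases h : k < d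
    · simp [h]
    · dsimp only
      rw [if_neg h, if_neg (by omega), Nat.add_sub_cancel, Equiv.Perm.coe_inv, Equiv.symm_apply_apply]
      omega
  right_inv k := by
    by_cases h : k < d
    · simp [h]
    · dsimp only
      rw [if_neg h, if_neg (by omega), Nat.add_sub_cancel, Equiv.Perm.coe_inv, Equiv.apply_symm_apply]
      omega

/-- The involution of `ℕ` swapping the blocks `{0,…,d-1}` and `{d,…,2d-1}`. -/
def theta (d : ℕ) : Equiv.Perm ℕ :=
  Function.Involutive.toPerm
    (fun k => if k < d then k + d else if k < 2 * d then k - d else k)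
    (by intro k; dsimp only; split_ifs <;> omega)

/-!
Write `θ` for the involution swapping the blocks `{0,…,d-1}` and `{d,…,2d-1}`, and `D(a, b)` for
the permutation acting by `a` on the first block and by `b` (shifted) on the second. The elements
of `M_d` are exactly the products `θ·D(α, β)` with `α, β ∈ S_d`. Since `θ D(α, β) θ = D(β, α)`,
the square of `θ·D(α, β)` is `D(βα, αβ)`, and this has the form `τ·ω^d(τ) = D(τ, τ)` iff `α` and
`β` commute. So `|M_d|` is the number of commuting pairs in `S_d`, which is `d!` times the number
of conjugacy classes of `S_d`, and these correspond to cycle types, i.e. to partitions of `d`.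
-/

open Equiv Equiv.Perm

namespace Nat.Partition

theorem parts_eq_filter_add_replicate {n : ℕ} (P : n.Partition) :
    P.parts = P.parts.filter (2 ≤ ·) +
      Multiset.replicate (n - (P.parts.filter (2 ≤ ·)).sum) 1 := by
  set ones := P.parts.filter (¬ 2 ≤ ·)
  have hones : ones = Multiset.replicate (Multiset.card ones) 1 :=
    Multiset.eq_replicate_card.2 fun b hb => by
      have := P.parts_pos (Multiset.mem_of_mem_filter hb)
      have := (Multiset.mem_filter.1 hb).2
      omega
  have hsplit : P.parts.filter (2 ≤ ·) + ones = P.parts := Multiset.filter_add_not _ _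
  have hsum := congrArg Multiset.sum hsplit
  rw [Multiset.sum_add, P.parts_sum, hones, Multiset.sum_replicate, smul_eq_mul, mul_one] at hsum
  rw [show n - (P.parts.filter (2 ≤ ·)).sum = Multiset.card ones by omega, ← hones, hsplit]

theorem eq_of_filter_two_le_eq {n : ℕ} {P Q : n.Partition}
    (h : P.parts.filter (2 ≤ ·) = Q.parts.filter (2 ≤ ·)) : P = Q := by
  ext1
  rw [parts_eq_filter_add_replicate P, parts_eq_filter_add_replicate Q, h]

end Nat.Partition

namespace Equiv.Perm

variable {α : Type*} [Fintype α] [DecidableEq α]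

theorem partition_surjective :
    Function.Surjective (partition : Perm α → (Fintype.card α).Partition) := by
  intro P
  have hsum : (P.parts.filter (2 ≤ ·)).sum ≤ Fintype.card α := by
    conv_rhs => rw [← P.parts_sum, ← Multiset.filter_add_not (2 ≤ ·) P.parts, Multiset.sum_add]
    exact Nat.le_add_right _ _
  obtain ⟨σ, hσ⟩ := (exists_with_cycleType_iff α).2
    ⟨hsum, fun a ha => (Multiset.mem_filter.1 ha).2⟩
  exact ⟨σ, Nat.Partition.eq_of_filter_two_le_eq (by rw [filter_parts_partition_eq_cycleType, hσ])⟩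

theorem card_conjClasses_eq_card_partition :
    Nat.card (ConjClasses (Perm α)) = Fintype.card (Fintype.card α).Partition := by
  let f : ConjClasses (Perm α) → (Fintype.card α).Partition :=
    Quotient.lift partition fun _ _ => partition_eq_of_isConj.mp
  have hf : Function.Bijective f := by
    refine ⟨fun x y => Quotient.inductionOn₂ x y fun σ τ h =>
      ConjClasses.mk_eq_mk_iff_isConj.2 (partition_eq_of_isConj.2 h), fun P => ?_⟩
    obtain ⟨σ, rfl⟩ := partition_surjective P
    exact ⟨ConjClasses.mk σ, rfl⟩
  rw [Nat.card_eq_of_bijective f hf, Nat.card_eq_fintype_card]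

end Equiv.Perm

theorem Equiv.Perm.ext_blocks (d : ℕ) {σ τ : Perm ℕ} (hlow : ∀ i : Fin d, σ i = τ i)
    (hhigh : ∀ i : Fin d, σ (i + d) = τ (i + d)) (hrest : ∀ k, 2 * d ≤ k → σ k = τ k) :
    σ = τ := by
  ext k
  rcases lt_or_ge k d with hk | hk
  · exact hlow ⟨k, hk⟩
  rcases lt_or_ge k (2 * d) with hk' | hk'
  · simpa [Nat.sub_add_cancel hk] using hhigh ⟨k - d, by omega⟩
  · exact hrest k hk'

section Blocks

variable {d : ℕ}

theorem shift_apply_of_lt (σ : Perm ℕ) {k : ℕ} (hk : k < d) : shift d σ k = k := if_pos hk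

theorem shift_apply_add (σ : Perm ℕ) (k : ℕ) : shift d σ (k + d) = σ k + d := by
  simp [shift]

theorem theta_apply (k : ℕ) :
    theta d k = if k < d then k + d else if k < 2 * d then k - d else k := rfl

theorem theta_apply_val (i : Fin d) : theta d i = i + d := if_pos i.2

theorem theta_apply_val_add (i : Fin d) : theta d (i + d) = i := by
  have := i.2
  simp only [theta_apply]
  split_ifs <;> omega

theorem theta_apply_of_le {k : ℕ} (hk : 2 * d ≤ k) : theta d k = k := by
  simp only [theta_apply]
  split_ifs <;> omega

noncomputable def lowHom (d : ℕ) : Perm (Fin d) →* Perm ℕ :=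
  viaEmbeddingHom Fin.valEmbedding

theorem lowHom_apply_val (γ : Perm (Fin d)) (i : Fin d) : lowHom d γ i = γ i :=
  viaEmbedding_apply γ Fin.valEmbedding i

theorem lowHom_apply_of_le (γ : Perm (Fin d)) {k : ℕ} (hk : d ≤ k) : lowHom d γ k = k :=
  viaEmbedding_apply_of_notMem γ _ k fun ⟨i, hi⟩ => by simp [← hi] at hk; omega

theorem exists_perm_fin_apply_eq (ρ : Perm ℕ) (h : ∀ k < d, ρ k < d) :
    ∃ γ : Perm (Fin d), ∀ i : Fin d, ρ i = γ i := by
  let f : Fin d → Fin d := fun i => ⟨ρ i, h i i.2⟩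
  have hf : f.Injective := fun i j hij => Fin.ext (ρ.injective (Fin.val_eq_of_eq hij))
  exact ⟨Equiv.ofBijective f (Finite.injective_iff_bijective.1 hf), fun _ => rfl⟩

theorem exists_lowHom_eq {τ : Perm ℕ} (h : ∀ k, d ≤ k → τ k = k) : ∃ γ, lowHom d γ = τ := by
  have hlow : ∀ k < d, τ k < d := fun k hk => by
    by_contra! hge
    have := τ.injective (h _ hge)
    omega
  obtain ⟨γ, hγ⟩ := exists_perm_fin_apply_eq τ hlow
  refine ⟨γ, Equiv.ext fun k => ?_⟩
  rcases lt_or_ge k d with hk | hk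
  · exact (lowHom_apply_val γ ⟨k, hk⟩).trans (hγ ⟨k, hk⟩).symm
  · rw [lowHom_apply_of_le γ hk, h k hk]

noncomputable def blockDiag (d : ℕ) (α β : Perm (Fin d)) : Perm ℕ :=
  lowHom d α * shift d (lowHom d β)

variable (α β : Perm (Fin d))

theorem blockDiag_apply_val (i : Fin d) : blockDiag d α β i = α i := by
  simp [blockDiag, shift_apply_of_lt _ i.2, lowHom_apply_val]

theorem blockDiag_apply_val_add (i : Fin d) : blockDiag d α β (i + d) = β i + d := by
  simp [blockDiag, shift_apply_add, lowHom_apply_val, lowHom_apply_of_le]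

theorem blockDiag_apply_of_le {k : ℕ} (hk : 2 * d ≤ k) : blockDiag d α β k = k := by
  obtain ⟨j, rfl⟩ := Nat.exists_eq_add_of_le' (by omega : d ≤ k)
  simp [blockDiag, shift_apply_add, lowHom_apply_of_le, show d ≤ j by omega]

theorem blockDiag_mul (α' β' : Perm (Fin d)) :
    blockDiag d α β * blockDiag d α' β' = blockDiag d (α * α') (β * β') :=
  ext_blocks d (by simp [blockDiag_apply_val]) (by simp [blockDiag_apply_val_add])
    (fun k hk => by simp [blockDiag_apply_of_le _ _ hk])

theorem blockDiag_inj {α β α' β' : Perm (Fin d)} :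
    blockDiag d α β = blockDiag d α' β' ↔ α = α' ∧ β = β' := by
  refine ⟨fun h => ⟨Equiv.ext fun i => Fin.ext ?_, Equiv.ext fun i => Fin.ext ?_⟩,
    fun ⟨hα, hβ⟩ => hα ▸ hβ ▸ rfl⟩
  · simpa [blockDiag_apply_val] using congr($h i)
  · simpa [blockDiag_apply_val_add] using congr($h (i + d))

theorem theta_mul_blockDiag_mul_theta :
    theta d * blockDiag d α β * theta d = blockDiag d β α :=
  ext_blocks d (by simp [theta_apply_val, theta_apply_val_add, blockDiag_apply_val,
      blockDiag_apply_val_add])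
    (by simp [theta_apply_val, theta_apply_val_add, blockDiag_apply_val, blockDiag_apply_val_add])
    (fun k hk => by simp [theta_apply_of_le hk, blockDiag_apply_of_le _ _ hk])

noncomputable def blockSwap (d : ℕ) (α β : Perm (Fin d)) : Perm ℕ :=
  theta d * blockDiag d α β

theorem blockSwap_apply_val (i : Fin d) : blockSwap d α β i = α i + d := by
  simp [blockSwap, blockDiag_apply_val, theta_apply_val]

theorem blockSwap_apply_val_add (i : Fin d) : blockSwap d α β (i + d) = β i := by
  simp [blockSwap, blockDiag_apply_val_add, theta_apply_val_add]

theorem blockSwap_apply_of_le {k : ℕ} (hk : 2 * d ≤ k) : blockSwap d α β k = k := by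
  simp [blockSwap, blockDiag_apply_of_le _ _ hk, theta_apply_of_le hk]

theorem blockSwap_mul_self : blockSwap d α β * blockSwap d α β = blockDiag d (β * α) (α * β) :=
  calc theta d * blockDiag d α β * (theta d * blockDiag d α β)
      = theta d * blockDiag d α β * theta d * blockDiag d α β := by simp only [mul_assoc]
    _ = blockDiag d (β * α) (α * β) := by rw [theta_mul_blockDiag_mul_theta, blockDiag_mul]

theorem blockSwap_inj {α β α' β' : Perm (Fin d)} :
    blockSwap d α β = blockSwap d α' β' ↔ α = α' ∧ β = β' :=
  (mul_right_inj (theta d)).trans blockDiag_inj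

end Blocks

/-- The set `M_d`. -/
def blockSwapSet (d : ℕ) : Set (Perm ℕ) :=
  {σ | (∀ k, 2 * d ≤ k → σ k = k) ∧ (∀ i < d, d ≤ σ i ∧ σ i < 2 * d) ∧
    ∃ τ : Perm ℕ, (∀ k, d ≤ k → τ k = k) ∧ σ * σ = τ * shift d τ}

theorem blockSwap_mem_blockSwapSet {d : ℕ} {α β : Perm (Fin d)} (h : Commute α β) :
    blockSwap d α β ∈ blockSwapSet d := by
  refine ⟨fun k hk => blockSwap_apply_of_le α β hk, fun i hi => ?_,
    lowHom d (α * β), fun k hk => lowHom_apply_of_le _ hk, ?_⟩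
  · have hi' := blockSwap_apply_val α β ⟨i, hi⟩
    have := (α ⟨i, hi⟩).2
    rw [Fin.val_mk] at hi'
    omega
  · rw [blockSwap_mul_self, ← h.eq]
    rfl

theorem exists_blockSwap_eq_of_mem {d : ℕ} {σ : Perm ℕ} (hσ : σ ∈ blockSwapSet d) :
    ∃ α β : Perm (Fin d), Commute α β ∧ blockSwap d α β = σ := by
  obtain ⟨hfix, hlow, τ, hτ, hsq⟩ := hσ
  obtain ⟨α, hα⟩ := exists_perm_fin_apply_eq (theta d * σ) fun k hk => by
    have := hlow k hk
    simp only [Perm.mul_apply, theta_apply]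
    split_ifs <;> omega
  have hσα : ∀ i : Fin d, σ i = α i + d := fun i => by
    have := hlow i i.2
    have := hα i
    simp only [Perm.mul_apply, theta_apply] at this
    split_ifs at this <;> omega
  -- `σ` maps `{0,…,d-1}` onto `{d,…,2d-1}`, so the upper block can only go down
  have hhigh : ∀ k < d, σ (k + d) < d := by
    intro k hk
    by_contra! hge
    rcases lt_or_ge (σ (k + d)) (2 * d) with h2 | h2
    · obtain ⟨i, hi⟩ := α.surjective ⟨σ (k + d) - d, by omega⟩
      have : σ i = σ (k + d) := by
        rw [hσα, hi, Fin.val_mk]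
        omega
      have := σ.injective this
      omega
    · have := σ.injective (hfix _ h2)
      omega
  obtain ⟨β, hβ⟩ := exists_perm_fin_apply_eq (σ * theta d) fun k hk => by
    rw [Perm.mul_apply, theta_apply, if_pos hk]
    exact hhigh k hk
  have hσβ : ∀ i : Fin d, σ (i + d) = β i := fun i => by simpa [theta_apply_val] using hβ i
  have hσ : blockSwap d α β = σ :=
    ext_blocks d (fun i => by rw [blockSwap_apply_val, hσα])
      (fun i => by rw [blockSwap_apply_val_add, hσβ])
      (fun k hk => by rw [blockSwap_apply_of_le _ _ hk, hfix k hk])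
  obtain ⟨γ, rfl⟩ := exists_lowHom_eq hτ
  have hdiag : blockDiag d (β * α) (α * β) = blockDiag d γ γ := by
    rw [← blockSwap_mul_self, hσ, hsq]
    rfl
  obtain ⟨hβα, hαβ⟩ := blockDiag_inj.1 hdiag
  exact ⟨α, β, hαβ.trans hβα.symm, hσ⟩

theorem card_blockSwapSet (d : ℕ) :
    Nat.card (blockSwapSet d) = Nat.card {p : Perm (Fin d) × Perm (Fin d) // Commute p.1 p.2} := by
  let f : {p : Perm (Fin d) × Perm (Fin d) // Commute p.1 p.2} → Perm ℕ :=
    fun p => blockSwap d p.1.1 p.1.2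
  have hf : Function.Injective f := fun p q h => Subtype.ext (Prod.ext_iff.2 (blockSwap_inj.1 h))
  have hrange : Set.range f = blockSwapSet d := by
    ext σ
    constructor
    · rintro ⟨⟨⟨α, β⟩, h⟩, rfl⟩
      exact blockSwap_mem_blockSwapSet h
    · intro hσ
      obtain ⟨α, β, h, rfl⟩ := exists_blockSwap_eq_of_mem hσ
      exact ⟨⟨(α, β), h⟩, rfl⟩
  rw [← hrange, Nat.card_range_of_injective hf]

theorem stmt_6_general (d : ℕ) :
    Nat.card {σ : Equiv.Perm ℕ //
        (∀ k, 2 * d ≤ k → σ k = k) ∧ (∀ i < d, d ≤ σ i ∧ σ i < 2 * d) ∧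
        ∃ τ : Equiv.Perm ℕ, (∀ k, d ≤ k → τ k = k) ∧ σ * σ = τ * shift d τ} =
      Fintype.card (Nat.Partition d) * Nat.factorial d := by
  change Nat.card (blockSwapSet d) = _
  rw [card_blockSwapSet, card_comm_eq_card_conjClasses_mul_card, card_conjClasses_eq_card_partition,
    Nat.card_eq_fintype_card, Fintype.card_perm, Fintype.card_fin]

/-- The number of permutations `σ` of `{0,…,2d-1}` mapping `{0,…,d-1}` onto
`{d,…,2d-1}` and such that `σ²` has the form `τ·ω^d(τ)` for some permutation `τ`
of `{0,…,d-1}`, equals `p(d)·d!` where `p(d)` is the number of partitions of `d`. -/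
theorem stmt_6 (d : ℕ) (hd : 2 ≤ d) :
    Nat.card {σ : Equiv.Perm ℕ //
        (∀ k, 2 * d ≤ k → σ k = k) ∧ (∀ i < d, d ≤ σ i ∧ σ i < 2 * d) ∧
        ∃ τ : Equiv.Perm ℕ, (∀ k, d ≤ k → τ k = k) ∧ σ * σ = τ * shift d τ} =
      Fintype.card (Nat.Partition d) * Nat.factorial d :=
  stmt_6_general d
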